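/- arXiv:1403.3951 — 2 statements merged into one kernel-verified Lean document; each statement's English description precedes it below -/
import Mathlib

section
/- Let L be the x-axis in the Heisenberg group and p = (0,y,z). Let p_L = (0,0,z). Then (1/2)(d(p,p_L)^4 + d(p_L,L)^4)^{1/4} ≤ d(p,L) ≤ 2(d(p,p_L)^4 + d(p_L,L)^4)^{1/4}, where d(p,p_L) = |y| and d(p_L,L) = |z|^{1/2}. -/
/-!
The fourth power of the distance from `(0, y, z)` to the axis point `(t, 0, 0)` is
`(t² + y²)² + (2ty - z)²`. At `t = 0` it equals `y⁴ + z²`, which gives the upper bound. For the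
lower bound, this quartic dominates `y⁴`, and, writing `z = 2ty - (2ty - z)` with
`(2ty)² ≤ (t² + y²)²`, also `z² / 2`; hence it is at least `(y⁴ + z²) / 3` for every `t`.
-/

/-- The Heisenberg group as `ℝ × ℝ × ℝ`. -/
abbrev H : Type := ℝ × ℝ × ℝ

/-- Heisenberg group multiplication. -/
def Hmul (a b : H) : H :=
  (a.1 + b.1, a.2.1 + b.2.1, a.2.2 + b.2.2 + 2 * (a.1 * b.2.1 - b.1 * a.2.1))

/-- Heisenberg group inverse. -/
def Hinv (a : H) : H := (-a.1, -a.2.1, -a.2.2)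

/-- The Koranyi norm. -/
noncomputable def KN (a : H) : ℝ :=
  ((a.1 ^ 2 + a.2.1 ^ 2) ^ 2 + a.2.2 ^ 2) ^ ((1 : ℝ) / 4)

/-- The Koranyi distance. -/
noncomputable def Hd (a b : H) : ℝ := KN (Hmul (Hinv a) b)

/-- Distance from a point to a set. -/
noncomputable def distSet (p : H) (L : Set H) : ℝ := sInf {r : ℝ | ∃ q ∈ L, r = Hd p q}

/-- The x-axis, a horizontal line. -/
def xAxis : Set H := {q : H | ∃ t : ℝ, q = (t, 0, 0)}

/-- A general horizontal line through `g` with horizontal direction `v`. -/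
def horizLine (g : H) (v : ℝ × ℝ) : Set H :=
  {q : H | ∃ t : ℝ, q = Hmul g (t * v.1, t * v.2, 0)}

/-- The non-horizontality `NH(g) = N(g⁻¹ · π̃(g))`. -/
noncomputable def NH (g : H) : ℝ := KN (Hmul (Hinv g) (g.1, g.2.1, 0))

lemma Hd_nonneg (p q : H) : 0 ≤ Hd p q :=
  Real.rpow_nonneg (by positivity) _

lemma Hd_zero_xAxis (y z t : ℝ) :
    Hd (0, y, z) (t, 0, 0) = ((t ^ 2 + y ^ 2) ^ 2 + (2 * t * y - z) ^ 2) ^ ((1 : ℝ) / 4) := by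
  simp only [Hd, Hmul, Hinv, KN]
  ring_nf

lemma distSet_xAxis (p : H) : distSet p xAxis = ⨅ t : ℝ, Hd p (t, 0, 0) := by
  unfold distSet iInf
  congr 1
  ext r
  simp [xAxis, eq_comm]

lemma pow_four_add_sq_le_three_mul (y z t : ℝ) :
    y ^ 4 + z ^ 2 ≤ 3 * ((t ^ 2 + y ^ 2) ^ 2 + (2 * t * y - z) ^ 2) := by
  have hy : y ^ 4 ≤ (t ^ 2 + y ^ 2) ^ 2 := by nlinarith [sq_nonneg t, sq_nonneg y]
  have hty : (2 * t * y) ^ 2 ≤ (t ^ 2 + y ^ 2) ^ 2 := by nlinarith [sq_nonneg (t ^ 2 - y ^ 2)]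
  have hz : z ^ 2 ≤ 2 * (2 * t * y) ^ 2 + 2 * (2 * t * y - z) ^ 2 := by
    nlinarith [sq_nonneg (4 * t * y - z)]
  linarith [sq_nonneg (2 * t * y - z)]

lemma half_mul_rpow_quarter_le {a b : ℝ} (ha : 0 ≤ a) (hab : a ≤ 16 * b) :
    1 / 2 * a ^ ((1 : ℝ) / 4) ≤ b ^ ((1 : ℝ) / 4) := by
  have hb : 0 ≤ b := by linarith
  have h16 : (16 : ℝ) ^ ((1 : ℝ) / 4) = 2 := by
    rw [show (16 : ℝ) = 2 ^ (4 : ℝ) by norm_num, ← Real.rpow_mul (by norm_num)]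
    norm_num
  calc 1 / 2 * a ^ ((1 : ℝ) / 4) ≤ 1 / 2 * (16 * b) ^ ((1 : ℝ) / 4) := by gcongr
    _ = b ^ ((1 : ℝ) / 4) := by rw [Real.mul_rpow (by norm_num) hb, h16]; ring

/-- For p = (0,y,z) and L the x-axis, with p_L = (0,0,z), d(p,p_L) = |y| and
d(p_L,L) = |z|^(1/2), we have the two-sided comparison of d(p,L) with
(d(p,p_L)^4 + d(p_L,L)^4)^(1/4). -/
theorem dist_to_line_comparison (y z : ℝ) :
    (1 / 2) * (|y| ^ 4 + (|z| ^ ((1 : ℝ) / 2)) ^ 4) ^ ((1 : ℝ) / 4)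
      ≤ distSet ((0 : ℝ), y, z) xAxis ∧
    distSet ((0 : ℝ), y, z) xAxis
      ≤ 2 * (|y| ^ 4 + (|z| ^ ((1 : ℝ) / 2)) ^ 4) ^ ((1 : ℝ) / 4) := by
  have habs : |y| ^ 4 + (|z| ^ ((1 : ℝ) / 2)) ^ 4 = y ^ 4 + z ^ 2 := by
    rw [← Real.rpow_natCast (|z| ^ ((1 : ℝ) / 2)) 4, ← Real.rpow_mul (abs_nonneg z),
      Even.pow_abs (by decide)]
    norm_num
  rw [habs, distSet_xAxis]
  constructor
  · refine le_ciInf fun t => ?_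
    rw [Hd_zero_xAxis]
    exact half_mul_rpow_quarter_le (by positivity)
      (by nlinarith [pow_four_add_sq_le_three_mul y z t, sq_nonneg (t ^ 2 + y ^ 2),
        sq_nonneg (2 * t * y - z)])
  · calc ⨅ t : ℝ, Hd (0, y, z) (t, 0, 0)
        ≤ Hd (0, y, z) (0, 0, 0) := ciInf_le ⟨0, by rintro _ ⟨t, rfl⟩; exact Hd_nonneg _ _⟩ 0
      _ = (y ^ 4 + z ^ 2) ^ ((1 : ℝ) / 4) := by rw [Hd_zero_xAxis]; ring_nf
      _ ≤ 2 * (y ^ 4 + z ^ 2) ^ ((1 : ℝ) / 4) := by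
        linarith [Real.rpow_nonneg (by positivity : 0 ≤ y ^ 4 + z ^ 2) ((1 : ℝ) / 4)]
end

section
/- For every a, b in the Heisenberg group and every horizontal line L, max{d(a,L), d(b,L)} ≥ (1/16)·NH(a^{-1}b)^2 / d(a,b). (Note the right-hand side is independent of L; it suffices to prove this when L is the x-axis.) -/
/-!
For any two points `p, q` of the line write
`a⁻¹b = u · m · w` with `u = a⁻¹p`, `m = p⁻¹q`, `w = q⁻¹b`. Since `p, q` lie on one horizontal
line, `m` is horizontal, and the vertical coordinate of `a⁻¹b` is
`u_z + w_z + 2 (ω(u, a⁻¹b) + ω(a⁻¹b, w) - ω(u, w))` for the symplectic form `ω` of the horizontal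
parts. With `ρ = max (N u) (N w)` and `d = d(a, b)` this gives `|z| ≤ 4ρ² + 4dρ`; together with
`|z| ≤ d²` it yields `NH(a⁻¹b)² = |z| ≤ 8 d ρ`, and taking the infimum over `p, q` proves the claim.
-/

/-- The symplectic form `ω(x, y) = x₁y₂ - y₁x₂` on horizontal parts; `(xy)_z = x_z + y_z + 2ω(x, y)`. -/
def symp (x y : H) : ℝ := x.1 * y.2.1 - y.1 * x.2.1

lemma KN_nonneg (g : H) : 0 ≤ KN g := Real.rpow_nonneg (by positivity) _

lemma KN_pow_four (g : H) : KN g ^ 4 = (g.1 ^ 2 + g.2.1 ^ 2) ^ 2 + g.2.2 ^ 2 := by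
  unfold KN
  rw [← Real.rpow_natCast _ 4, ← Real.rpow_mul (by positivity)]
  norm_num

lemma abs_le_KN_sq_of_sq_le {g : H} {x : ℝ} (h : x ^ 2 ≤ KN g ^ 4) : |x| ≤ KN g ^ 2 :=
  abs_le_of_sq_le_sq (by rwa [← pow_mul]) (by positivity)

lemma horiz_sq_le_KN_sq (g : H) : g.1 ^ 2 + g.2.1 ^ 2 ≤ KN g ^ 2 :=
  (le_abs_self _).trans <| abs_le_KN_sq_of_sq_le <| by
    rw [KN_pow_four]; nlinarith [sq_nonneg g.2.2]

lemma abs_vert_le_KN_sq (g : H) : |g.2.2| ≤ KN g ^ 2 :=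
  abs_le_KN_sq_of_sq_le <| by rw [KN_pow_four]; nlinarith [sq_nonneg (g.1 ^ 2 + g.2.1 ^ 2)]

lemma abs_symp_le (x y : H) : |symp x y| ≤ KN x * KN y := by
  refine abs_le_of_sq_le_sq ?_ (mul_nonneg (KN_nonneg x) (KN_nonneg y))
  -- Lagrange's identity: `ω(x, y)² + ⟨x, y⟩² = |x|² |y|²` on horizontal parts.
  calc symp x y ^ 2 ≤ (x.1 ^ 2 + x.2.1 ^ 2) * (y.1 ^ 2 + y.2.1 ^ 2) := by
        unfold symp; nlinarith [sq_nonneg (x.1 * y.1 + x.2.1 * y.2.1)]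
    _ ≤ KN x ^ 2 * KN y ^ 2 :=
        mul_le_mul (horiz_sq_le_KN_sq x) (horiz_sq_le_KN_sq y) (by positivity) (by positivity)
    _ = (KN x * KN y) ^ 2 := (mul_pow _ _ _).symm

lemma Hd_nonneg_s12 (a b : H) : 0 ≤ Hd a b := KN_nonneg _

lemma Hd_comm (a b : H) : Hd a b = Hd b a := by
  simp only [Hd, KN, Hmul, Hinv]
  ring_nf

lemma NH_sq (g : H) : NH g ^ 2 = |g.2.2| := by
  have hNH : NH g ^ 4 = g.2.2 ^ 2 := by
    rw [NH, KN_pow_four]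
    simp only [Hmul, Hinv]
    ring
  rw [← pow_left_inj₀ (by positivity) (abs_nonneg _) two_ne_zero, ← pow_mul, hNH, sq_abs]

lemma vert_Hmul_Hinv_eq_zero_of_mem_horizLine {g p q : H} {v : ℝ × ℝ}
    (hp : p ∈ horizLine g v) (hq : q ∈ horizLine g v) : (Hmul (Hinv p) q).2.2 = 0 := by
  obtain ⟨s, rfl⟩ := hp
  obtain ⟨t, rfl⟩ := hq
  simp only [Hmul, Hinv]
  ring

lemma vert_Hmul_Hinv_decomp (a p q b : H) :
    (Hmul (Hinv a) b).2.2 = (Hmul (Hinv a) p).2.2 + (Hmul (Hinv p) q).2.2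
      + (Hmul (Hinv q) b).2.2 + 2 * (symp (Hmul (Hinv a) p) (Hmul (Hinv a) b)
        + symp (Hmul (Hinv a) b) (Hmul (Hinv q) b)
        - symp (Hmul (Hinv a) p) (Hmul (Hinv q) b)) := by
  simp only [Hmul, Hinv, symp]
  ring

lemma abs_vert_le_of_eq_symp {u c w : H}
    (hc : c.2.2 = u.2.2 + w.2.2 + 2 * (symp u c + symp c w - symp u w))
    {ρ : ℝ} (hu : KN u ≤ ρ) (hw : KN w ≤ ρ) : |c.2.2| ≤ 8 * KN c * ρ := by
  have hKu := KN_nonneg u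
  have hKc := KN_nonneg c
  have hρ : 0 ≤ ρ := hKu.trans hu
  have hnear : |c.2.2| ≤ 4 * ρ ^ 2 + 4 * KN c * ρ := by
    have huc := abs_le.mp <| (abs_symp_le u c).trans (mul_le_mul_of_nonneg_right hu hKc)
    have hcw := abs_le.mp <| (abs_symp_le c w).trans (mul_le_mul_of_nonneg_left hw hKc)
    have huw := abs_le.mp <| (abs_symp_le u w).trans (mul_le_mul hu hw (KN_nonneg w) hρ)
    have hu2 := abs_le.mp <| (abs_vert_le_KN_sq u).trans (pow_le_pow_left₀ hKu hu 2)
    have hw2 := abs_le.mp <| (abs_vert_le_KN_sq w).trans (pow_le_pow_left₀ (KN_nonneg w) hw 2)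
    rw [hc, abs_le]
    constructor <;> linarith
  have hfar : |c.2.2| ≤ KN c ^ 2 := abs_vert_le_KN_sq c
  rcases le_total ρ (KN c) with h | h <;> nlinarith [mul_le_mul_of_nonneg_left h hKc]

lemma abs_vert_le_of_horizontal {a p q b : H} (hpq : (Hmul (Hinv p) q).2.2 = 0) :
    |(Hmul (Hinv a) b).2.2| ≤ 8 * Hd a b * max (Hd a p) (Hd b q) := by
  refine abs_vert_le_of_eq_symp (u := Hmul (Hinv a) p) (w := Hmul (Hinv q) b) ?_
    (le_max_left _ _) ((Hd_comm q b).trans_le (le_max_right _ _))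
  rw [vert_Hmul_Hinv_decomp a p q b, hpq, add_zero]

lemma le_max_distSet_of_forall {a b : H} {L : Set H} (hL : L.Nonempty) {K : ℝ}
    (h : ∀ p ∈ L, ∀ q ∈ L, K ≤ max (Hd a p) (Hd b q)) :
    K ≤ max (distSet a L) (distSet b L) := by
  by_contra! hlt
  obtain ⟨x, hx⟩ := hL
  have hne (c : H) : {r | ∃ q ∈ L, r = Hd c q}.Nonempty := ⟨_, x, hx, rfl⟩
  obtain ⟨_, ⟨p, hp, rfl⟩, hpK⟩ := exists_lt_of_csInf_lt (hne a) (max_lt_iff.mp hlt).1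
  obtain ⟨_, ⟨q, hq, rfl⟩, hqK⟩ := exists_lt_of_csInf_lt (hne b) (max_lt_iff.mp hlt).2
  exact (h p hp q hq).not_gt (max_lt hpK hqK)

lemma mem_horizLine_self (g : H) (v : ℝ × ℝ) : g ∈ horizLine g v :=
  ⟨0, by simp [Hmul]⟩

theorem NH_min_beta_general (a b : H) (g : H) (v : ℝ × ℝ) :
    max (distSet a (horizLine g v)) (distSet b (horizLine g v))
      ≥ (1 / 16) * NH (Hmul (Hinv a) b) ^ 2 / Hd a b := by
  refine le_max_distSet_of_forall ⟨g, mem_horizLine_self g v⟩ fun p hp q hq => ?_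
  have hρ : 0 ≤ max (Hd a p) (Hd b q) := le_max_of_le_left (Hd_nonneg_s12 a p)
  have hbound := abs_vert_le_of_horizontal (a := a) (b := b)
    (vert_Hmul_Hinv_eq_zero_of_mem_horizLine hp hq)
  rw [NH_sq]
  refine div_le_of_le_mul₀ (Hd_nonneg_s12 a b) hρ ?_
  nlinarith [mul_nonneg (Hd_nonneg_s12 a b) hρ]

/-- For every pair of distinct points a, b in the Heisenberg group and every
horizontal line L, the max of their distances to L is at least
(1/16) NH(a⁻¹b)^2 / d(a,b). -/
theorem NH_min_beta (a b : H) (hab : a ≠ b) (g : H) (v : ℝ × ℝ) (hv : v ≠ 0) :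
    max (distSet a (horizLine g v)) (distSet b (horizLine g v))
      ≥ (1 / 16) * NH (Hmul (Hinv a) b) ^ 2 / Hd a b :=
  NH_min_beta_general a b g v
end
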